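/- Let R ⊆ S be an extension of commutative rings. (1) If R ⊆ S is strongly local, then R ⊆ S is co-integrally closed. (2) If R ⊆ S is an integral extension, then R ⊆ S is strongly local if and only if R ⊆ S is co-integrally closed. -/

import Mathlib

/-- A ring extension `R ⊆ S` is *strongly local* if `U(R) = U(S)`. -/
def Subring.IsSLExt {S : Type*} [CommRing S] (R : Subring S) : Prop :=
  ∀ x y : S, x * y = 1 → x ∈ R ∧ y ∈ R

/-- A ring extension `R ⊆ S` is *co-integrally closed* if every `x ∈ S` which
is a root of a comonic polynomial over `R` (one whose constant coefficient is a
unit of `R`) lies in `R`. -/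
def Subring.IsCoIntegrallyClosed {S : Type*} [CommRing S] (R : Subring S) : Prop :=
  ∀ x : S, (∃ p : Polynomial ↥R, IsUnit (p.coeff 0) ∧ Polynomial.eval₂ R.subtype x p = 0) →
    x ∈ R

/-!
A root `x` of a comonic polynomial `p` is a unit, since `x * (p.divX)(x) = -p(0)`; so a strongly local
extension contains it. Conversely, if `x * y = 1` with `y` integral over `R`, then `x = y⁻¹` is a root of
the reverse of a monic polynomial annihilating `y`, and that reverse is comonic.
-/

open Polynomial

theorem isUnit_of_eval₂_eq_zero_of_isUnit_coeff_zero {R S : Type*} [CommRing R] [CommRing S]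
    (f : R →+* S) {p : R[X]} (hp : IsUnit (p.coeff 0)) {x : S} (hx : p.eval₂ f x = 0) :
    IsUnit x := by
  have hdivX : x * -p.divX.eval₂ f x = f (p.coeff 0) := by
    have := congrArg (eval₂ f x) (X_mul_divX_add p)
    simp only [eval₂_add, eval₂_mul, eval₂_X, eval₂_C, hx] at this
    linear_combination -this
  exact isUnit_of_mul_isUnit_left (hdivX ▸ hp.map f)

namespace Subring

variable {S : Type*} [CommRing S] {R : Subring S}

theorem IsSLExt.mem_of_isUnit (hR : R.IsSLExt) {x : S} (hx : IsUnit x) : x ∈ R := by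
  obtain ⟨u, rfl⟩ := hx
  exact (hR _ _ u.mul_inv).1

theorem IsSLExt.isCoIntegrallyClosed (hR : R.IsSLExt) : R.IsCoIntegrallyClosed :=
  fun _ ⟨_, hp, hx⟩ =>
    hR.mem_of_isUnit (isUnit_of_eval₂_eq_zero_of_isUnit_coeff_zero R.subtype hp hx)

theorem IsCoIntegrallyClosed.mem_of_mul_eq_one (hR : R.IsCoIntegrallyClosed) {x y : S}
    (hxy : x * y = 1) (hy : IsIntegral R y) : x ∈ R := by
  obtain ⟨p, hmonic, hpy⟩ := hy
  let : Invertible y := ⟨x, hxy, by rwa [mul_comm]⟩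
  refine hR x ⟨p.reverse, ?_, (eval₂_reverse_eq_zero_iff R.subtype y p).mpr hpy⟩
  rw [coeff_zero_reverse, hmonic.leadingCoeff]
  exact isUnit_one

theorem IsCoIntegrallyClosed.isSLExt (hR : R.IsCoIntegrallyClosed)
    (hint : ∀ x : S, IsIntegral R x) : R.IsSLExt :=
  fun x y hxy =>
    ⟨hR.mem_of_mul_eq_one hxy (hint y), hR.mem_of_mul_eq_one (by rwa [mul_comm]) (hint x)⟩

end Subring

theorem SL_and_co_integrally_closed {S : Type*} [CommRing S] (R : Subring S) :
    -- (1) strongly local implies co-integrally closed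
    (R.IsSLExt → R.IsCoIntegrallyClosed) ∧
    -- (2) for integral extensions the two notions are equivalent
    ((∀ x : S, IsIntegral R x) → (R.IsSLExt ↔ R.IsCoIntegrallyClosed)) :=
  ⟨Subring.IsSLExt.isCoIntegrallyClosed,
    fun hint => ⟨Subring.IsSLExt.isCoIntegrallyClosed, fun hR => hR.isSLExt hint⟩⟩
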